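/- arXiv:1311.2806 — 6 statements merged into one kernel-verified Lean document; each statement's English description precedes it below -/
import Mathlib

section
/- If a probability measure ν on ℝ^d has a nontrivial absolutely continuous component, i.e., ν = a·ν_ac + (1−a)·ν' with a > 0 and ν_ac absolutely continuous with respect to Lebesgue measure and ν' a probability measure, then ν satisfies the Cramér condition: for every α > 0, sup_{‖s‖ ≥ α} |∫ e^{i⟨s,x⟩} dν(x)| < 1. -/
/-!
Let `φ` be the characteristic function of `ν_ac`. By the Riemann–Lebesgue lemma `φ(s) → 0` as
`‖s‖ → ∞`, and `|φ(s)| < 1` for `s ≠ 0`: equality would force `⟨s, x⟩` into a single coset of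
`2πℤ` for `ν_ac`-a.e. `x`, i.e. `ν_ac` would be carried by countably many parallel hyperplanes,
which are Lebesgue-null. By continuity and compactness `|φ| ≤ b < 1` on `{‖s‖ ≥ α}`, so the
characteristic function of `ν` is bounded there by `a b + (1 - a) < 1`.
-/

open MeasureTheory Complex Filter Set
open scoped Topology FourierTransform RealInnerProductSpace

theorem Continuous.exists_lt_forall_le_of_tendsto_cocompact {X : Type*} [TopologicalSpace X]
    {f : X → ℝ} (hf : Continuous f) {l c : ℝ} (hlim : Tendsto f (cocompact X) (𝓝 l)) (hl : l < c)
    {S : Set X} (hS : IsClosed S) (hlt : ∀ x ∈ S, f x < c) : ∃ b < c, ∀ x ∈ S, f x ≤ b := by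
  obtain ⟨m, hlm, hmc⟩ := exists_between hl
  obtain ⟨K, hK, hKf⟩ := (hasBasis_cocompact.tendsto_left_iff).1 hlim (Iio m) (Iio_mem_nhds hlm)
  have hfar : ∀ x ∉ K, f x ≤ m := fun x hx => (hKf hx).le
  rcases (K ∩ S).eq_empty_or_nonempty with hempty | hne
  · exact ⟨m, hmc, fun x hx => hfar x fun hxK => hempty.subset ⟨hxK, hx⟩⟩
  · obtain ⟨x₀, hx₀, hmax⟩ := (hK.inter_right hS).exists_isMaxOn hne hf.continuousOn
    refine ⟨max m (f x₀), max_lt hmc (hlt x₀ hx₀.2), fun x hx => ?_⟩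
    by_cases hxK : x ∈ K
    · exact le_max_of_le_right (hmax ⟨hxK, hx⟩)
    · exact le_max_of_le_left (hfar x hxK)

namespace MeasureTheory.Measure

variable {E : Type*} [NormedAddCommGroup E] [NormedSpace ℝ E] [MeasurableSpace E] [BorelSpace E]
  [FiniteDimensional ℝ E]

theorem addHaar_preimage_singleton_of_ne_zero (μ : Measure E) [μ.IsAddHaarMeasure]
    {L : StrongDual ℝ E} (hL : L ≠ 0) (c : ℝ) : μ (L ⁻¹' {c}) = 0 := by
  have hlevel : L ⁻¹' {c} = AffineSubspace.comap (L : E →ₗ[ℝ] ℝ).toAffineMap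
      (affineSpan ℝ {c}) := by
    rw [AffineSubspace.coe_comap, AffineSubspace.coe_affineSpan_singleton]; rfl
  rw [hlevel]
  refine addHaar_affineSubspace μ _ fun htop => hL ?_
  have hconst : ∀ x, L x = c := fun x => by
    simpa using AffineSubspace.mem_comap.1 (htop ▸ AffineSubspace.mem_top ℝ E x :
      x ∈ AffineSubspace.comap (L : E →ₗ[ℝ] ℝ).toAffineMap (affineSpan ℝ {c}))
  ext x
  simpa [hconst x] using (hconst 0).symm

theorem AbsolutelyContinuous.nullSingletonClass_map_of_ne_zero {μ ν : Measure E}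
    [ν.IsAddHaarMeasure] (hμ : μ ≪ ν) {L : StrongDual ℝ E} (hL : L ≠ 0) :
    NullSingletonClass (μ.map L) where
  measure_singleton c := by
    rw [map_apply L.measurable (measurableSet_singleton c)]
    exact hμ (addHaar_preimage_singleton_of_ne_zero ν hL c)

end MeasureTheory.Measure

section CharFun

variable {E : Type*} [NormedAddCommGroup E] [InnerProductSpace ℝ E] [MeasurableSpace E]

theorem charFun_add_measure [OpensMeasurableSpace E] (μ ν : Measure E) [IsFiniteMeasure μ]
    [IsFiniteMeasure ν] (t : E) : charFun (μ + ν) t = charFun μ t + charFun ν t := by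
  simp only [charFun_eq_integral_innerProbChar]
  exact integral_add_measure ((BoundedContinuousFunction.innerProbChar t).integrable μ)
    ((BoundedContinuousFunction.innerProbChar t).integrable ν)

theorem charFun_smul_measure (μ : Measure E) (c : ENNReal) (t : E) :
    charFun (c • μ) t = c.toReal * charFun μ t := by
  simp [charFun_apply, integral_smul_measure]

theorem norm_charFun_mixture_le [OpensMeasurableSpace E] (μ₁ μ₂ : Measure E) [IsFiniteMeasure μ₁]
    [IsFiniteMeasure μ₂] {a : ℝ} (ha : 0 ≤ a) (ha1 : a ≤ 1) (t : E) :
    ‖charFun (ENNReal.ofReal a • μ₁ + ENNReal.ofReal (1 - a) • μ₂) t‖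
      ≤ a * ‖charFun μ₁ t‖ + (1 - a) * ‖charFun μ₂ t‖ := by
  have := μ₁.smul_finite (ENNReal.ofReal_ne_top (r := a))
  have := μ₂.smul_finite (ENNReal.ofReal_ne_top (r := 1 - a))
  rw [charFun_add_measure, charFun_smul_measure, charFun_smul_measure,
    ENNReal.toReal_ofReal ha, ENNReal.toReal_ofReal (sub_nonneg.2 ha1)]
  refine (norm_add_le _ _).trans_eq ?_
  rw [norm_mul, norm_mul, norm_real, norm_real, Real.norm_of_nonneg ha,
    Real.norm_of_nonneg (sub_nonneg.2 ha1)]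

end CharFun

theorem norm_charFun_eq_integral_cos (ρ : Measure ℝ) [IsFiniteMeasure ρ] (r : ℝ) :
    ‖charFun ρ r‖ = ∫ x, Real.cos (r * x - (charFun ρ r).arg) ∂ρ := by
  set z := charFun ρ r
  have hrot : (‖z‖ : ℂ) = ∫ x, exp ((r * x - z.arg : ℝ) * I) ∂ρ :=
    calc (‖z‖ : ℂ) = z * exp (-z.arg * I) := by
          rw [← norm_mul_exp_arg_mul_I z, mul_assoc, ← exp_add]; simp
      _ = _ := by
          rw [show z = charFun ρ r from rfl, charFun_apply, ← integral_mul_const]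
          congr 1 with x
          rw [← exp_add, RCLike.inner_apply, conj_trivial]; congr 1; push_cast; ring
  have hint : Integrable (fun x => exp ((r * x - z.arg : ℝ) * I)) ρ :=
    .of_bound (by fun_prop) 1 (ae_of_all _ fun x => by rw [norm_exp_ofReal_mul_I])
  calc ‖z‖ = (‖z‖ : ℂ).re := by simp
    _ = ∫ x, (exp ((r * x - z.arg : ℝ) * I)).re ∂ρ := by
          rw [hrot]; exact (integral_re hint).symm
    _ = _ := by simp_rw [exp_ofReal_mul_I_re]

theorem norm_charFun_lt_one_of_nullSingletonClass {ρ : Measure ℝ} [IsProbabilityMeasure ρ]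
    [NullSingletonClass ρ] {r : ℝ} (hr : r ≠ 0) : ‖charFun ρ r‖ < 1 := by
  set θ := (charFun ρ r).arg
  set g : ℝ → ℝ := fun x => 1 - Real.cos (r * x - θ)
  have hcos_int : Integrable (fun x => Real.cos (r * x - θ)) ρ :=
    .of_bound (by fun_prop) 1 (ae_of_all _ fun x => by simpa using Real.abs_cos_le_one _)
  have hgint : ∫ x, g x ∂ρ = 1 - ‖charFun ρ r‖ := by
    rw [integral_sub (integrable_const 1) hcos_int, norm_charFun_eq_integral_cos]; simp [θ]
  have hzeros : (Function.support g)ᶜ ⊆ range fun n : ℤ => (n * (2 * Real.pi) + θ) / r := by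
    intro x hx
    have hgx : 1 - Real.cos (r * x - θ) = 0 := Function.notMem_support.1 hx
    obtain ⟨n, hn⟩ := (Real.cos_eq_one_iff _).1 (by linarith)
    exact ⟨n, by field_simp; linarith⟩
  have hpos : 0 < ∫ x, g x ∂ρ := by
    rw [integral_pos_iff_support_of_nonneg (fun x => sub_nonneg.2 (Real.cos_le_one _))
        ((integrable_const 1).sub hcos_int),
      measure_congr (ae_eq_univ.2 (measure_mono_null hzeros ((countable_range _).measure_zero ρ))),
      measure_univ]
    exact one_pos
  linarith

section InnerProductSpace

variable {V : Type*} [NormedAddCommGroup V] [InnerProductSpace ℝ V] [FiniteDimensional ℝ V]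
  [MeasurableSpace V] [BorelSpace V]

theorem norm_charFun_lt_one_of_absolutelyContinuous {μ ν : Measure V} [IsProbabilityMeasure μ]
    [ν.IsAddHaarMeasure] (hμ : μ ≪ ν) {t : V} (ht : t ≠ 0) : ‖charFun μ t‖ < 1 := by
  set L := InnerProductSpace.toDualMap ℝ V t
  have hL : L ≠ 0 := (map_ne_zero_iff _ (InnerProductSpace.toDualMap ℝ V).injective).2 ht
  have := hμ.nullSingletonClass_map_of_ne_zero hL
  have := Measure.isProbabilityMeasure_map (μ := μ) L.measurable.aemeasurable
  rw [charFun_eq_charFunDual_toDualMap, charFunDual_eq_charFun_map_one]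
  exact norm_charFun_lt_one_of_nullSingletonClass one_ne_zero

theorem tendsto_charFun_cocompact_of_absolutelyContinuous {μ : Measure V} [SigmaFinite μ]
    (hμ : μ ≪ volume) : Tendsto (charFun μ) (cocompact V) (𝓝 0) := by
  set f : V → ℂ := fun v => ((μ.rnDeriv volume v).toReal : ℂ)
  -- the Fourier kernel is `𝐞 (-⟪v, w⟫) = exp (-2πi ⟪v, w⟫)`, hence the rescaling by `-(2π)⁻¹`
  have hfourier :
      charFun μ = (fun w => ∫ v, 𝐞 (-⟪v, w⟫) • f v) ∘ fun t => -(2 * Real.pi)⁻¹ • t := by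
    funext t
    rw [charFun_eq_fourierIntegral', ← Measure.withDensity_rnDeriv_eq μ volume hμ,
      VectorFourier.fourierIntegral, integral_withDensity_eq_integral_toReal_smul
        (Measure.measurable_rnDeriv _ _) (Measure.rnDeriv_lt_top _ _)]
    congr 1 with v
    simp [f, Circle.smul_def, real_smul, mul_comm]
  have hscale : Tendsto (fun t : V => -(2 * Real.pi)⁻¹ • t) (cocompact V) (cocompact V) :=
    (Homeomorph.smulOfNeZero _ (by simp [Real.pi_ne_zero])).map_cocompact.le
  rw [hfourier]
  exact (tendsto_integral_exp_inner_smul_cocompact f).comp hscale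

end InnerProductSpace

theorem cramer_condition_of_ac_component_general
    (d : ℕ) (ν νac ν' : Measure (EuclideanSpace ℝ (Fin d)))
    [IsProbabilityMeasure νac] [IsProbabilityMeasure ν']
    (a : ℝ) (ha : 0 < a) (ha1 : a ≤ 1)
    (hdec : ν = ENNReal.ofReal a • νac + ENNReal.ofReal (1 - a) • ν')
    (hac : νac ≪ (volume : Measure (EuclideanSpace ℝ (Fin d)))) :
    ∀ α : ℝ, 0 < α →
      (⨆ s : {s : EuclideanSpace ℝ (Fin d) // α ≤ ‖s‖},
        ‖∫ x, Complex.exp (Complex.I * (inner ℝ s.1 x : ℝ)) ∂ν‖) < 1 := by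
  intro α hα
  obtain ⟨b, hb1, hb⟩ := continuous_charFun.norm.exists_lt_forall_le_of_tendsto_cocompact
    (by simpa using (tendsto_charFun_cocompact_of_absolutelyContinuous hac).norm) one_pos
    (isClosed_le (continuous_const (y := α)) continuous_norm)
    fun s hs => norm_charFun_lt_one_of_absolutelyContinuous hac (norm_pos_iff.1 (hα.trans_le hs))
  -- `max b 0` because `Real.iSup_le` needs a nonnegative bound (the index type is empty if `d = 0`)
  have hbound : ∀ s : EuclideanSpace ℝ (Fin d), α ≤ ‖s‖ →
      ‖charFun ν s‖ ≤ a * max b 0 + (1 - a) * 1 := fun s hs => by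
    rw [hdec]
    refine (norm_charFun_mixture_le νac ν' ha.le ha1 s).trans ?_
    gcongr
    · exact (hb s hs).trans (le_max_left b 0)
    · exact norm_charFun_le_one s
  have hlt : a * max b 0 + (1 - a) * 1 < 1 := by
    nlinarith [max_lt hb1 one_pos]
  refine lt_of_le_of_lt (Real.iSup_le (fun s => ?_) (by positivity)) hlt
  convert hbound s.1 s.2 using 2
  simp only [charFun_apply, real_inner_comm, mul_comm]

theorem cramer_condition_of_ac_component
    (d : ℕ) (ν νac ν' : Measure (EuclideanSpace ℝ (Fin d)))
    [IsProbabilityMeasure ν] [IsProbabilityMeasure νac] [IsProbabilityMeasure ν']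
    (a : ℝ) (ha : 0 < a) (ha1 : a ≤ 1)
    (hdec : ν = ENNReal.ofReal a • νac + ENNReal.ofReal (1 - a) • ν')
    (hac : νac ≪ (volume : Measure (EuclideanSpace ℝ (Fin d)))) :
    ∀ α : ℝ, 0 < α →
      (⨆ s : {s : EuclideanSpace ℝ (Fin d) // α ≤ ‖s‖},
        ‖∫ x, Complex.exp (Complex.I * (inner ℝ s.1 x : ℝ)) ∂ν‖) < 1 :=
  cramer_condition_of_ac_component_general d ν νac ν' a ha ha1 hdec hac
end

section
/- Let ρ be a probability measure on ℝ of the form ρ = a·ρ_ac + b·ρ_d + c·ρ_s with a > 0, where ρ_ac has a density f with respect to Lebesgue measure. Then the law ν_ρ of (Z, Z²), where Z has law ρ, satisfies the two-dimensional Cramér condition: for every α > 0, sup_{‖(s,t)‖ ≥ α} |∫_ℝ e^{isz + itz²} dρ(z)| < 1. -/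
/-!
Write `φ_μ(s, t) = ∫ exp (i (s z + t z²)) dμ(z)`. Since `|φ_ρ| ≤ a |φ_{ρac}| + (1 - a)`, it suffices
to show that `|φ_{ρac}| < 1` away from the origin and `|φ_{ρac}| → 0` at infinity; continuity and
compactness then give a uniform bound on `{‖p‖ ≥ α}`.

For `p ≠ 0`, `|φ_{ρac}(p)| = 1` would force `z ↦ exp (i (s z + t z²))` to be `ρac`-a.e. constant,
but its level sets are countable unions of root sets of nonzero quadratics, hence Lebesgue-null.
For the decay, `|φ_{ρac}|²` is the characteristic function of the law of `(Z - Z', Z² - Z'²)` for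
independent copies `Z, Z'`. Off the diagonal, `(x, y) ↦ (x - y, x² - y²)` has the differentiable left
inverse `(u, w) ↦ ((w / u + u) / 2, (w / u - u) / 2)`, so this law is absolutely continuous on `ℝ²`
and the Riemann–Lebesgue lemma applies.
-/

open MeasureTheory Complex Filter Topology Set
open scoped ENNReal ComplexConjugate

theorem iSup_lt_one_of_eventually_le {X : Type*} [TopologicalSpace X] {f : X → ℝ}
    (hf : Continuous f) {s : Set X} (hs : IsClosed s) (hlt : ∀ x ∈ s, f x < 1) {c : ℝ}
    (hc : c < 1) (hlim : ∀ᶠ x in cocompact X, f x ≤ c) :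
    ⨆ x : s, f x < 1 := by
  obtain ⟨K, hK, hKc⟩ := hasBasis_cocompact.eventually_iff.1 hlim
  obtain ⟨B, hB1, hB⟩ : ∃ B < 1, ∀ x ∈ s ∩ K, f x ≤ B := by
    rcases (s ∩ K).eq_empty_or_nonempty with he | hne
    · exact ⟨0, one_pos, by simp [he]⟩
    · obtain ⟨x₀, hx₀, hmax⟩ := (hK.inter_left hs).exists_isMaxOn hne hf.continuousOn
      exact ⟨f x₀, hlt x₀ hx₀.1, hmax⟩
  refine (Real.iSup_le (fun x => ?_) (le_max_right (max B c) 0)).trans_lt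
    (max_lt (max_lt hB1 hc) one_pos)
  by_cases hxK : (x : X) ∈ K
  · exact (hB x ⟨x.2, hxK⟩).trans ((le_max_left _ _).trans (le_max_left _ _))
  · exact (hKc hxK).trans ((le_max_right _ _).trans (le_max_left _ _))

theorem tendsto_charFunDual_cocompact_of_absolutelyContinuous {V : Type*}
    [NormedAddCommGroup V] [NormedSpace ℝ V] [FiniteDimensional ℝ V] [MeasurableSpace V]
    [BorelSpace V] {μ ν : Measure V} [μ.IsAddHaarMeasure] [SigmaFinite ν] (hν : ν ≪ μ) :
    Tendsto (charFunDual ν) (cocompact (StrongDual ℝ V)) (𝓝 0) := by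
  have hscale : Tendsto (fun L : StrongDual ℝ V => (-(2 * Real.pi)⁻¹ : ℝ) • L)
      (cocompact _) (cocompact _) :=
    (Homeomorph.smulOfNeZero (-(2 * Real.pi)⁻¹ : ℝ) (by simp [Real.pi_ne_zero])).map_cocompact.le
  convert (tendsto_integral_exp_smul_cocompact
    (fun v => (ν.rnDeriv μ v).toReal • (1 : ℂ)) μ).comp hscale using 1
  ext L
  simp only [charFunDual_apply, Function.comp_apply, ← integral_rnDeriv_smul hν]
  congr 1 with v
  rw [Circle.smul_def, Real.fourierChar_apply, smul_comm, smul_apply,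
    smul_eq_mul, mul_one]
  congr 3
  rw [smul_eq_mul]
  field_simp

namespace MeasureTheory.Measure

theorem map_absolutelyContinuous_of_differentiableOn_leftInv {E : Type*} [NormedAddCommGroup E]
    [NormedSpace ℝ E] [FiniteDimensional ℝ E] [MeasurableSpace E] [BorelSpace E]
    {μ : Measure E} [μ.IsAddHaarMeasure] {f g : E → E} (hf : Measurable f) {s N : Set E}
    (hg : DifferentiableOn ℝ g s) (hN : μ N = 0) (hgf : ∀ x ∉ N, f x ∈ s ∧ g (f x) = x) :
    μ.map f ≪ μ := by
  refine AbsolutelyContinuous.mk fun t ht ht0 => ?_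
  rw [map_apply hf ht]
  have hsub : f ⁻¹' t ⊆ g '' (t ∩ s) ∪ N := fun x hx => by
    by_cases hxN : x ∈ N
    · exact Or.inr hxN
    · exact Or.inl ⟨f x, ⟨hx, (hgf x hxN).1⟩, (hgf x hxN).2⟩
  exact measure_mono_null hsub <| measure_union_null
    (addHaar_image_eq_zero_of_differentiableOn_of_addHaar_eq_zero μ (hg.mono inter_subset_right)
      (measure_mono_null inter_subset_left ht0)) hN

end MeasureTheory.Measure

noncomputable def parabolaChar (p : ℝ × ℝ) (z : ℝ) : ℂ := exp (I * (p.1 * z + p.2 * z ^ 2))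

noncomputable def parabolaCharFun (μ : Measure ℝ) (p : ℝ × ℝ) : ℂ := ∫ z, parabolaChar p z ∂μ

lemma parabolaChar_eq (p : ℝ × ℝ) (z : ℝ) :
    parabolaChar p z = exp (↑(p.1 * z + p.2 * z ^ 2) * I) := by
  rw [parabolaChar, mul_comm]
  push_cast
  rfl

lemma norm_parabolaChar (p : ℝ × ℝ) (z : ℝ) : ‖parabolaChar p z‖ = 1 := by
  rw [parabolaChar_eq, norm_exp_ofReal_mul_I]

lemma continuous_parabolaChar (p : ℝ × ℝ) : Continuous (parabolaChar p) := by
  unfold parabolaChar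
  fun_prop

lemma integrable_parabolaChar (μ : Measure ℝ) [IsFiniteMeasure μ] (p : ℝ × ℝ) :
    Integrable (parabolaChar p) μ :=
  (integrable_const (1 : ℝ)).mono' (continuous_parabolaChar p).aestronglyMeasurable
    (.of_forall fun z => (norm_parabolaChar p z).le)

lemma finite_setOf_quadratic_eq {p : ℝ × ℝ} (hp : p ≠ 0) (d : ℝ) :
    {z : ℝ | p.1 * z + p.2 * z ^ 2 = d}.Finite := by
  open Polynomial in
  have hq : (C p.2 * X ^ 2 + C p.1 * X - C d : ℝ[X]) ≠ 0 := by
    intro h0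
    have e0 := congrArg (eval 0) h0
    have e1 := congrArg (eval 1) h0
    have e2 := congrArg (eval (-1)) h0
    simp only [eval_sub, eval_add, eval_mul, eval_pow, eval_C, eval_X, eval_zero] at e0 e1 e2
    exact hp (Prod.ext (by simp only [Prod.fst_zero]; linarith)
      (by simp only [Prod.snd_zero]; linarith))
  refine (Polynomial.finite_setOfPred_isRoot hq).subset fun z hz => ?_
  simp only [mem_ofPred_eq, Polynomial.IsRoot, Polynomial.eval_sub, Polynomial.eval_add,
    Polynomial.eval_mul, Polynomial.eval_pow, Polynomial.eval_C, Polynomial.eval_X] at hz ⊢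
  linarith

lemma countable_setOf_exp_mul_I_eq (c : ℂ) : {x : ℝ | exp (x * I) = c}.Countable := by
  rcases eq_empty_or_nonempty {x : ℝ | exp (x * I) = c} with he | ⟨x₀, hx₀⟩
  · simp [he]
  refine (countable_range fun n : ℤ => x₀ + n * (2 * Real.pi)).mono fun x hx => ?_
  obtain ⟨n, hn⟩ := exp_eq_exp_iff_exists_int.1 (hx.trans hx₀.symm)
  exact ⟨n, by simpa using (congrArg im hn).symm⟩

lemma countable_setOf_parabolaChar_eq {p : ℝ × ℝ} (hp : p ≠ 0) (c : ℂ) :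
    {z : ℝ | parabolaChar p z = c}.Countable := by
  have : {z : ℝ | parabolaChar p z = c} =
      ⋃ x ∈ {x : ℝ | exp (x * I) = c}, {z : ℝ | p.1 * z + p.2 * z ^ 2 = x} := by
    ext z
    simp [parabolaChar_eq]
  rw [this]
  exact (countable_setOf_exp_mul_I_eq c).biUnion fun x _ =>
    (finite_setOf_quadratic_eq hp x).countable

lemma norm_parabolaCharFun_le (μ : Measure ℝ) [IsFiniteMeasure μ] (p : ℝ × ℝ) :
    ‖parabolaCharFun μ p‖ ≤ μ.real univ := by
  simpa [parabolaCharFun] using norm_integral_le_of_norm_le_const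
    (.of_forall fun z => (norm_parabolaChar p z).le)

lemma continuous_parabolaCharFun (μ : Measure ℝ) [IsFiniteMeasure μ] :
    Continuous (parabolaCharFun μ) :=
  continuous_of_dominated (fun p => (continuous_parabolaChar p).aestronglyMeasurable)
    (fun p => .of_forall fun z => (norm_parabolaChar p z).le) (integrable_const 1)
    (.of_forall fun z => by unfold parabolaChar; fun_prop)

lemma norm_parabolaCharFun_lt_one {μ : Measure ℝ} [IsProbabilityMeasure μ] (hμ : μ ≪ volume)
    {p : ℝ × ℝ} (hp : p ≠ 0) : ‖parabolaCharFun μ p‖ < 1 := by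
  have h := ae_eq_const_or_norm_integral_lt_of_norm_le_const (μ := μ)
    (.of_forall fun z => (norm_parabolaChar p z).le)
  rw [probReal_univ, mul_one] at h
  refine h.resolve_left fun hconst => ?_
  have hnull : ∀ᵐ z ∂μ, parabolaChar p z ≠ ⨍ z, parabolaChar p z ∂μ :=
    hμ <| measure_mono_null (fun z hz => not_not.1 hz)
      ((countable_setOf_parabolaChar_eq hp _).measure_zero volume)
  obtain ⟨z, hz, hz'⟩ := (hconst.and hnull).exists
  exact hz' hz

def parabolaDiff (q : ℝ × ℝ) : ℝ × ℝ := (q.1 - q.2, q.1 ^ 2 - q.2 ^ 2)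

lemma measurable_parabolaDiff : Measurable parabolaDiff := by
  unfold parabolaDiff
  fun_prop

lemma volume_setOf_fst_eq_snd : (volume : Measure (ℝ × ℝ)) {q | q.1 = q.2} = 0 := by
  rw [Measure.volume_eq_prod,
    Measure.prod_apply (measurableSet_eq_fun measurable_fst measurable_snd)]
  simp [Set.preimage]

theorem map_parabolaDiff_absolutelyContinuous :
    (volume : Measure (ℝ × ℝ)).map parabolaDiff ≪ volume := by
  refine Measure.map_absolutelyContinuous_of_differentiableOn_leftInv measurable_parabolaDiff
    (g := fun v => ((v.2 / v.1 + v.1) / 2, (v.2 / v.1 - v.1) / 2)) (s := {v | v.1 ≠ 0})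
    ?_ volume_setOf_fst_eq_snd fun q hq => ?_
  · intro v (hv : v.1 ≠ 0)
    exact (by fun_prop (disch := exact hv) : DifferentiableAt ℝ _ v).differentiableWithinAt
  · have h : q.1 - q.2 ≠ 0 := sub_ne_zero.2 hq
    have hsum : (q.1 ^ 2 - q.2 ^ 2) / (q.1 - q.2) = q.1 + q.2 := by
      rw [div_eq_iff h]
      ring
    refine ⟨h, ?_⟩
    simp only [parabolaDiff, hsum]
    ext <;> ring

noncomputable def prodDualEquiv : (ℝ × ℝ) ≃L[ℝ] StrongDual ℝ (ℝ × ℝ) :=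
  (ContinuousLinearMap.toSpanSingletonCLE.prodCongr ContinuousLinearMap.toSpanSingletonCLE).trans
    (ContinuousLinearMap.coprodEquivL ℝ)

lemma prodDualEquiv_apply (p v : ℝ × ℝ) : prodDualEquiv p v = p.1 * v.1 + p.2 * v.2 := by
  simp [prodDualEquiv]
  ring

lemma parabolaCharFun_mul_conj (μ : Measure ℝ) [IsFiniteMeasure μ] (p : ℝ × ℝ) :
    parabolaCharFun μ p * conj (parabolaCharFun μ p) =
      charFunDual ((μ.prod μ).map parabolaDiff) (prodDualEquiv p) := by
  rw [charFunDual_apply, integral_map measurable_parabolaDiff.aemeasurable (by fun_prop),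
    parabolaCharFun, ← integral_conj, ← integral_prod_mul]
  congr 1 with q
  simp only [parabolaChar, parabolaDiff, prodDualEquiv_apply, ← exp_conj, ← exp_add]
  congr 1
  simp only [map_mul, map_add, conj_I, conj_ofReal, map_pow]
  push_cast
  ring

lemma tendsto_norm_parabolaCharFun_cocompact {μ : Measure ℝ} [IsFiniteMeasure μ]
    (hμ : μ ≪ volume) :
    Tendsto (fun p => ‖parabolaCharFun μ p‖) (cocompact (ℝ × ℝ)) (𝓝 0) := by
  have hν : (μ.prod μ).map parabolaDiff ≪ volume :=
    ((hμ.prod hμ).map measurable_parabolaDiff).trans map_parabolaDiff_absolutelyContinuous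
  have hsq := ((tendsto_charFunDual_cocompact_of_absolutelyContinuous hν).comp
    prodDualEquiv.toHomeomorph.map_cocompact.le).norm.sqrt
  rw [norm_zero, Real.sqrt_zero] at hsq
  convert hsq using 2 with p
  rw [Function.comp_apply, ContinuousLinearEquiv.coe_toHomeomorph, ← parabolaCharFun_mul_conj,
    norm_mul, RCLike.norm_conj, Real.sqrt_mul_self (norm_nonneg _)]

lemma norm_parabolaCharFun_le_of_eq_smul_add {ρ μ ν : Measure ℝ} [IsProbabilityMeasure ρ]
    [IsProbabilityMeasure μ] {a : ℝ} (ha : 0 ≤ a) (h : ρ = ENNReal.ofReal a • μ + ν)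
    (p : ℝ × ℝ) : ‖parabolaCharFun ρ p‖ ≤ a * ‖parabolaCharFun μ p‖ + (1 - a) := by
  have : IsFiniteMeasure (ENNReal.ofReal a • μ) :=
    isFiniteMeasure_of_le ρ (h ▸ Measure.le_add_right le_rfl)
  have : IsFiniteMeasure ν := isFiniteMeasure_of_le ρ (h ▸ Measure.le_add_left le_rfl)
  have hν : ν.real univ = 1 - a := by
    have := congrArg (fun m : Measure ℝ => m.real univ) h
    rw [measureReal_add_apply, measureReal_ennreal_smul_apply, probReal_univ, probReal_univ,
      ENNReal.toReal_ofReal ha, mul_one] at this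
    linarith
  have hsplit : parabolaCharFun ρ p = a • parabolaCharFun μ p + parabolaCharFun ν p := by
    rw [parabolaCharFun, h, integral_add_measure (integrable_parabolaChar _ p)
      (integrable_parabolaChar ν p), integral_smul_measure, ENNReal.toReal_ofReal ha]
    rfl
  calc ‖parabolaCharFun ρ p‖ ≤ ‖a • parabolaCharFun μ p‖ + ‖parabolaCharFun ν p‖ :=
        hsplit ▸ norm_add_le _ _
    _ ≤ a * ‖parabolaCharFun μ p‖ + (1 - a) := by
        rw [norm_smul, Real.norm_of_nonneg ha, ← hν]
        gcongr
        exact norm_parabolaCharFun_le ν p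

theorem cramer_condition_for_Z_Zsq_general
    (ρ ρac ρd ρs : Measure ℝ)
    [IsProbabilityMeasure ρ] [IsProbabilityMeasure ρac]
    (a b c : ℝ) (ha : 0 < a)
    (hdec : ρ = ENNReal.ofReal a • ρac + ENNReal.ofReal b • ρd + ENNReal.ofReal c • ρs)
    (hac : ρac ≪ (volume : Measure ℝ)) :
    ∀ α : ℝ, 0 < α →
      (⨆ p : {p : ℝ × ℝ // α ≤ ‖p‖},
        ‖∫ z, Complex.exp (Complex.I * (p.1.1 * z + p.1.2 * z ^ 2)) ∂ρ‖) < 1 := by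
  intro α hα
  have hbound := norm_parabolaCharFun_le_of_eq_smul_add ha.le (hdec.trans (add_assoc _ _ _))
  have hsmall : ∀ᶠ p in cocompact (ℝ × ℝ), ‖parabolaCharFun ρac p‖ ≤ 1 / 2 :=
    (tendsto_norm_parabolaCharFun_cocompact hac).eventually (ge_mem_nhds one_half_pos)
  refine iSup_lt_one_of_eventually_le (continuous_parabolaCharFun ρ).norm
    (isClosed_le continuous_const continuous_norm) (fun p hp => ?_) (c := 1 - a / 2)
    (by linarith) (hsmall.mono fun p hp => ?_)
  · nlinarith [hbound p, norm_parabolaCharFun_lt_one hac (norm_pos_iff.1 (hα.trans_le hp))]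
  · nlinarith [hbound p]

theorem cramer_condition_for_Z_Zsq
    (ρ ρac ρd ρs : Measure ℝ)
    [IsProbabilityMeasure ρ] [IsProbabilityMeasure ρac]
    [IsProbabilityMeasure ρd] [IsProbabilityMeasure ρs]
    (a b c : ℝ) (ha : 0 < a) (hb : 0 ≤ b) (hc : 0 ≤ c) (habc : a + b + c = 1)
    (hdec : ρ = ENNReal.ofReal a • ρac + ENNReal.ofReal b • ρd + ENNReal.ofReal c • ρs)
    (hac : ρac ≪ (volume : Measure ℝ)) :
    ∀ α : ℝ, 0 < α →
      (⨆ p : {p : ℝ × ℝ // α ≤ ‖p‖},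
        ‖∫ z, Complex.exp (Complex.I * (p.1.1 * z + p.1.2 * z ^ 2)) ∂ρ‖) < 1 :=
  cramer_condition_for_Z_Zsq_general ρ ρac ρd ρs a b c ha hdec hac
end

section
/- Let ρ_ac be a probability measure on ℝ with density f, and let ν_{ρ_ac} be the law of (Z, Z²) for Z ~ ρ_ac. Then the convolution ν_{ρ_ac}^{*2} is absolutely continuous with respect to Lebesgue measure on ℝ², with density f₂(x,y) = (2y − x²)^{−1/2} · f((x + √(2y − x²))/2) · f((x − √(2y − x²))/2) · 1_{x² < 2y}. -/
/-!
The law of `(Z₁ + Z₂, Z₁² + Z₂²)` is the pushforward of `f(a) f(b) da db` under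
`T(a, b) = (a + b, a² + b²)`. Off the Lebesgue-null diagonal, `T` is injective on each of the
half-planes `a < b` and `b < a`, mapping both onto `{x² < 2y}`, where the preimages of `(x, y)`
are `(x ∓ √(2y - x²))/2` in either order. Since `|det DT(a, b)| = 2|b - a| = 2√(2y - x²)`,
the change of variables formula on each half-plane contributes `f(a) f(b) / (2√(2y - x²))`,
and the two halves add up to the stated density.
-/

open MeasureTheory Real Set ContinuousLinearMap
open scoped ENNReal

theorem MeasureTheory.Measure.prod_diagonal_eq_zero {α : Type*} [MeasurableSpace α]
    [MeasurableEq α] (μ ν : Measure α) [SFinite ν] [NullSingletonClass ν] :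
    μ.prod ν (diagonal α) = 0 := by
  rw [Measure.prod_apply measurableSet_diagonal]
  simp [diagonal]

section ChangeOfVariables

variable {E : Type*} [NormedAddCommGroup E] [NormedSpace ℝ E] [FiniteDimensional ℝ E]
  [MeasurableSpace E] [BorelSpace E] (μ : Measure E) [μ.IsAddHaarMeasure]

theorem map_restrict_withDensity_abs_det_fderiv_mul {s : Set E} {φ : E → E}
    {φ' : E → E →L[ℝ] E} (hs : MeasurableSet s) (hφ' : ∀ x ∈ s, HasFDerivWithinAt φ (φ' x) s x)
    (hφ : InjOn φ s) (hφm : Measurable φ) (g : E → ℝ≥0∞) :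
    ((μ.restrict s).withDensity fun x => ENNReal.ofReal |(φ' x).det| * g (φ x)).map φ
      = (μ.restrict (φ '' s)).withDensity g := by
  ext t ht
  rw [Measure.map_apply hφm ht, withDensity_apply _ (hφm ht), withDensity_apply _ ht,
    Measure.restrict_restrict (hφm ht), Measure.restrict_restrict ht, ← image_preimage_inter,
    lintegral_image_eq_lintegral_abs_det_fderiv_mul μ ((hφm ht).inter hs)
      (fun x hx => (hφ' x hx.2).mono inter_subset_right) (hφ.mono inter_subset_right)]

end ChangeOfVariables

noncomputable section PowerSums

def powerSums (p : ℝ × ℝ) : ℝ × ℝ := (p.1 + p.2, p.1 ^ 2 + p.2 ^ 2)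

def powerSumsDeriv (p : ℝ × ℝ) : (ℝ × ℝ) →L[ℝ] (ℝ × ℝ) :=
  (fst ℝ ℝ ℝ + snd ℝ ℝ ℝ).prod ((2 * p.1) • fst ℝ ℝ ℝ + (2 * p.2) • snd ℝ ℝ ℝ)

@[fun_prop]
theorem measurable_powerSums : Measurable powerSums := by
  unfold powerSums; fun_prop

theorem hasFDerivAt_powerSums (p : ℝ × ℝ) : HasFDerivAt powerSums (powerSumsDeriv p) p := by
  refine (hasFDerivAt_fst.add hasFDerivAt_snd).prodMk ?_
  have h1 : HasFDerivAt (fun q : ℝ × ℝ => q.1 ^ 2) _ p := (hasFDerivAt_fst (𝕜 := ℝ)).pow 2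
  have h2 : HasFDerivAt (fun q : ℝ × ℝ => q.2 ^ 2) _ p := (hasFDerivAt_snd (𝕜 := ℝ)).pow 2
  convert h1.fun_add h2 using 3 <;> norm_num

theorem det_powerSumsDeriv (p : ℝ × ℝ) : (powerSumsDeriv p).det = 2 * (p.2 - p.1) := by
  rw [ContinuousLinearMap.det, ← LinearMap.det_toMatrix (Module.Basis.finTwoProd ℝ),
    Matrix.det_fin_two]
  simp [LinearMap.toMatrix_apply, powerSumsDeriv]
  ring

theorem powerSums_swap (p : ℝ × ℝ) : powerSums p.swap = powerSums p := by
  simp only [powerSums, Prod.fst_swap, Prod.snd_swap, add_comm]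

theorem powerSums_eq_powerSums_iff {p q : ℝ × ℝ} :
    powerSums p = powerSums q ↔ q = p ∨ q = p.swap := by
  constructor
  · intro h
    simp only [powerSums, Prod.mk.injEq] at h
    obtain ⟨hsum, hsq⟩ := h
    have : (q.1 - p.1) * (q.1 - p.2) = 0 := by
      have : q.2 = p.1 + p.2 - q.1 := by linarith
      rw [this] at hsq; nlinarith
    rcases mul_eq_zero.1 this with h | h
    · exact .inl (Prod.ext (by linarith) (by linarith))
    · exact .inr (Prod.ext (by simp only [Prod.fst_swap]; linarith)
        (by simp only [Prod.snd_swap]; linarith))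
  · rintro (rfl | rfl)
    · rfl
    · exact (powerSums_swap p).symm

theorem injOn_powerSums {s : Set (ℝ × ℝ)} (hs : ∀ p ∈ s, p.swap ∉ s) : InjOn powerSums s := by
  intro p hp q hq h
  rcases powerSums_eq_powerSums_iff.1 h with rfl | rfl
  · rfl
  · exact absurd hq (hs p hp)

theorem powerSums_mem_of_ne {p : ℝ × ℝ} (hp : p.1 ≠ p.2) :
    (powerSums p).1 ^ 2 < 2 * (powerSums p).2 := by
  have : 0 < (p.1 - p.2) ^ 2 := by positivity [sub_ne_zero.2 hp]
  simp only [powerSums]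
  nlinarith

theorem image_powerSums_lt :
    powerSums '' {p | p.1 < p.2} = {q : ℝ × ℝ | q.1 ^ 2 < 2 * q.2} := by
  refine Subset.antisymm (image_subset_iff.2 fun p (hp : p.1 < p.2) => powerSums_mem_of_ne hp.ne)
    fun q (hq : q.1 ^ 2 < 2 * q.2) => ?_
  have hD : 0 < 2 * q.2 - q.1 ^ 2 := by linarith
  refine ⟨((q.1 - √(2 * q.2 - q.1 ^ 2)) / 2, (q.1 + √(2 * q.2 - q.1 ^ 2)) / 2), ?_, ?_⟩
  · change (q.1 - √(2 * q.2 - q.1 ^ 2)) / 2 < (q.1 + √(2 * q.2 - q.1 ^ 2)) / 2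
    linarith [Real.sqrt_pos.2 hD]
  · have := Real.sq_sqrt hD.le
    ext <;> simp only [powerSums] <;> nlinarith

theorem image_powerSums_gt :
    powerSums '' {p | p.2 < p.1} = {q : ℝ × ℝ | q.1 ^ 2 < 2 * q.2} := by
  have : {p : ℝ × ℝ | p.2 < p.1} = Prod.swap '' {p | p.1 < p.2} := by
    rw [image_swap_eq_preimage_swap]; rfl
  rw [this, image_image]
  simp only [powerSums_swap, image_powerSums_lt]

def powerSumsDensity (f : ℝ → ℝ) (q : ℝ × ℝ) : ℝ≥0∞ :=
  ENNReal.ofReal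
    (if q.1 ^ 2 < 2 * q.2 then
      (√(2 * q.2 - q.1 ^ 2))⁻¹ * f ((q.1 + √(2 * q.2 - q.1 ^ 2)) / 2)
        * f ((q.1 - √(2 * q.2 - q.1 ^ 2)) / 2)
    else 0)

theorem abs_det_mul_powerSumsDensity_of_lt {f : ℝ → ℝ} (hf0 : ∀ x, 0 ≤ f x) {p : ℝ × ℝ}
    (hp : p.1 < p.2) :
    ENNReal.ofReal |(powerSumsDeriv p).det| * powerSumsDensity f (powerSums p)
      = 2 * (ENNReal.ofReal (f p.1) * ENNReal.ofReal (f p.2)) := by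
  obtain ⟨a, b⟩ := p
  have hba : 0 < b - a := sub_pos.2 hp
  have hsqrt : √(2 * (a ^ 2 + b ^ 2) - (a + b) ^ 2) = b - a := by
    rw [show 2 * (a ^ 2 + b ^ 2) - (a + b) ^ 2 = (b - a) ^ 2 by ring, Real.sqrt_sq hba.le]
  have hmem : (a + b) ^ 2 < 2 * (a ^ 2 + b ^ 2) := powerSums_mem_of_ne (p := (a, b)) hp.ne
  have hmax : (a + b + (b - a)) / 2 = b := by ring
  have hmin : (a + b - (b - a)) / 2 = a := by ring
  simp only [powerSumsDensity, powerSums, det_powerSumsDeriv, if_pos hmem, hsqrt, hmax, hmin]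
  rw [← ENNReal.ofReal_mul (abs_nonneg _), ← ENNReal.ofReal_mul (hf0 a),
    ← ENNReal.ofReal_ofNat 2, ← ENNReal.ofReal_mul zero_le_two, abs_of_pos (by positivity)]
  congr 1
  field_simp

theorem abs_det_mul_powerSumsDensity {f : ℝ → ℝ} (hf0 : ∀ x, 0 ≤ f x) {p : ℝ × ℝ}
    (hp : p.1 ≠ p.2) :
    ENNReal.ofReal |(powerSumsDeriv p).det| * powerSumsDensity f (powerSums p)
      = 2 * (ENNReal.ofReal (f p.1) * ENNReal.ofReal (f p.2)) := by
  rcases hp.lt_or_gt with hp | hp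
  · exact abs_det_mul_powerSumsDensity_of_lt hf0 hp
  · have := abs_det_mul_powerSumsDensity_of_lt hf0 (p := p.swap) hp
    rwa [powerSums_swap, det_powerSumsDeriv, abs_mul, Prod.fst_swap, Prod.snd_swap, abs_sub_comm,
      ← abs_mul, ← det_powerSumsDeriv, mul_comm (ENNReal.ofReal (f p.2))] at this

theorem map_powerSums_restrict_withDensity {f : ℝ → ℝ} (hf0 : ∀ x, 0 ≤ f x)
    {s : Set (ℝ × ℝ)} (hs : MeasurableSet s) (hswap : ∀ p ∈ s, p.swap ∉ s)
    (himage : powerSums '' s = {q | q.1 ^ 2 < 2 * q.2}) :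
    ((volume.restrict s).withDensity
        fun p => 2 * (ENNReal.ofReal (f p.1) * ENNReal.ofReal (f p.2))).map powerSums
      = volume.withDensity (powerSumsDensity f) := by
  have hne : ∀ p ∈ s, p.1 ≠ p.2 := fun p hp heq =>
    hswap p hp (by rwa [show p.swap = p from Prod.ext heq.symm heq])
  have hvanish : {q | q.1 ^ 2 < 2 * q.2}.indicator (powerSumsDensity f) = powerSumsDensity f := by
    refine indicator_eq_self.2 fun q hq => by_contra fun (hU : ¬q.1 ^ 2 < 2 * q.2) => hq ?_
    rw [powerSumsDensity, if_neg hU, ENNReal.ofReal_zero]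
  rw [← hvanish, withDensity_indicator (measurableSet_lt (by fun_prop) (by fun_prop)), ← himage,
    ← map_restrict_withDensity_abs_det_fderiv_mul volume hs
      (fun p _ => (hasFDerivAt_powerSums p).hasFDerivWithinAt) (injOn_powerSums hswap)
      measurable_powerSums]
  refine congrArg _ (withDensity_congr_ae ((ae_restrict_iff' hs).2 (.of_forall fun p hp => ?_)))
  exact (abs_det_mul_powerSumsDensity hf0 (hne p hp)).symm

theorem volume_eq_restrict_lt_add_restrict_gt :
    (volume : Measure (ℝ × ℝ))
      = volume.restrict {p | p.1 < p.2} + volume.restrict {p | p.2 < p.1} := by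
  have hdisj : Disjoint {p : ℝ × ℝ | p.1 < p.2} {p | p.2 < p.1} :=
    disjoint_left.2 fun p (h₁ : p.1 < p.2) (h₂ : p.2 < p.1) => lt_asymm h₁ h₂
  rw [← Measure.restrict_union hdisj (measurableSet_lt measurable_snd measurable_fst), eq_comm]
  have hdiag : (volume : Measure (ℝ × ℝ)) (diagonal ℝ) = 0 := by
    rw [Measure.volume_eq_prod]; exact Measure.prod_diagonal_eq_zero volume volume
  exact Measure.restrict_eq_self_of_ae_mem (measure_mono_null
    (fun p hp => by_contra fun (hne : p.1 ≠ p.2) => hp hne.lt_or_gt) hdiag)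

theorem map_powerSums_withDensity {f : ℝ → ℝ} (hf0 : ∀ x, 0 ≤ f x) :
    ((volume : Measure (ℝ × ℝ)).withDensity
        fun p => ENNReal.ofReal (f p.1) * ENNReal.ofReal (f p.2)).map powerSums
      = volume.withDensity (powerSumsDensity f) := by
  set g : ℝ × ℝ → ℝ≥0∞ := fun p => ENNReal.ofReal (f p.1) * ENNReal.ofReal (f p.2)
  have hlt : ((volume.restrict {p | p.1 < p.2}).withDensity fun p => 2 * g p).map powerSums
      = volume.withDensity (powerSumsDensity f) :=
    map_powerSums_restrict_withDensity hf0 (measurableSet_lt measurable_fst measurable_snd)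
      (fun p h₁ h₂ => lt_asymm h₁ (show p.2 < p.1 from h₂)) image_powerSums_lt
  have hgt : ((volume.restrict {p | p.2 < p.1}).withDensity fun p => 2 * g p).map powerSums
      = volume.withDensity (powerSumsDensity f) :=
    map_powerSums_restrict_withDensity hf0 (measurableSet_lt measurable_snd measurable_fst)
      (fun p h₁ h₂ => lt_asymm h₁ (show p.1 < p.2 from h₂)) image_powerSums_gt
  have htwice : (2 : ℝ≥0∞) • (volume.withDensity g).map powerSums
      = (2 : ℝ≥0∞) • volume.withDensity (powerSumsDensity f) := by
    rw [← Measure.map_smul, ← withDensity_smul' _ _ ENNReal.ofNat_ne_top]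
    simp only [Pi.smul_def, smul_eq_mul]
    conv_lhs => rw [volume_eq_restrict_lt_add_restrict_gt]
    rw [withDensity_add_measure, Measure.map_add _ _ measurable_powerSums, hlt, hgt, two_smul]
  ext t ht
  simpa [ENNReal.mul_right_inj] using congr($htwice t)

end PowerSums

theorem conv_sq_density_general
    (f : ℝ → ℝ) (hf0 : ∀ x, 0 ≤ f x) (hfmeas : Measurable f)
    (ρac : Measure ℝ) (hρ : ρac = volume.withDensity (fun x => ENNReal.ofReal (f x)))
    (ν : Measure (ℝ × ℝ)) (hν : ν = ρac.map (fun z => (z, z ^ 2))) :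
    (ν.prod ν).map (fun p => p.1 + p.2)
      = volume.withDensity (fun q : ℝ × ℝ =>
          ENNReal.ofReal
            (if q.1 ^ 2 < 2 * q.2 then
              (Real.sqrt (2 * q.2 - q.1 ^ 2))⁻¹
                * f ((q.1 + Real.sqrt (2 * q.2 - q.1 ^ 2)) / 2)
                * f ((q.1 - Real.sqrt (2 * q.2 - q.1 ^ 2)) / 2)
            else 0)) := by
  subst hρ hν
  have hsq : Measurable fun z : ℝ => (z, z ^ 2) := by fun_prop
  rw [Measure.map_prod_map _ _ hsq hsq, Measure.map_map (by fun_prop) (hsq.prodMap hsq),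
    prod_withDensity hfmeas.ennreal_ofReal hfmeas.ennreal_ofReal, ← Measure.volume_eq_prod]
  exact map_powerSums_withDensity hf0

theorem conv_sq_density
    (f : ℝ → ℝ) (hf0 : ∀ x, 0 ≤ f x) (hfmeas : Measurable f)
    (hf1 : ∫ x, f x = 1)
    (ρac : Measure ℝ) (hρ : ρac = volume.withDensity (fun x => ENNReal.ofReal (f x)))
    (ν : Measure (ℝ × ℝ)) (hν : ν = ρac.map (fun z => (z, z ^ 2))) :
    (ν.prod ν).map (fun p => p.1 + p.2)
      = volume.withDensity (fun q : ℝ × ℝ =>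
          ENNReal.ofReal
            (if q.1 ^ 2 < 2 * q.2 then
              (Real.sqrt (2 * q.2 - q.1 ^ 2))⁻¹
                * f ((q.1 + Real.sqrt (2 * q.2 - q.1 ^ 2)) / 2)
                * f ((q.1 - Real.sqrt (2 * q.2 - q.1 ^ 2)) / 2)
            else 0)) :=
  conv_sq_density_general f hf0 hfmeas ρac hρ ν hν
end

section
/- If ν₂ is a probability measure on ℝ^d satisfying the Cramér condition and ν₂ is absolutely continuous with respect to a probability measure ν₁ on ℝ^d, then ν₁ also satisfies the Cramér condition. -/
/-!
If `‖φ₁(sₙ)‖ → 1` along frequencies with `‖sₙ‖ ≥ α`, rotate by phases `cₙ` with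
`cₙ φ₁(sₙ) = ‖φ₁(sₙ)‖`. The nonnegative bounded functions `1 - re (cₙ e^{i⟨sₙ,x⟩})` then have
`ν₁`-integrals tending to `0`, so they tend to `0` in `ν₁`-measure; along subsequences this becomes
`ν₁`-a.e. and hence `ν₂`-a.e. convergence, and dominated convergence forces `‖φ₂(sₙ)‖ → 1`,
contradicting the Cramér condition for `ν₂`.
-/

open MeasureTheory Complex Filter Topology

section

variable {X : Type*} [MeasurableSpace X] {μ ν : Measure X}

theorem norm_integral_le_one_of_norm_le_one [IsProbabilityMeasure μ] {f : X → ℂ}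
    (hf : ∀ x, ‖f x‖ ≤ 1) : ‖∫ x, f x ∂μ‖ ≤ 1 := by
  simpa using norm_integral_le_of_norm_le_const (μ := μ) (Eventually.of_forall hf)

theorem integral_one_sub_re_mul [IsProbabilityMeasure μ] {f : X → ℂ} (hf : Integrable f μ)
    (c : ℂ) : ∫ x, 1 - (c * f x).re ∂μ = 1 - (c * ∫ x, f x ∂μ).re := by
  have hcf : Integrable (fun x => (c * f x).re) μ := (hf.const_mul c).re
  rw [integral_sub (integrable_const 1) hcf, integral_const, probReal_univ,
    one_smul, ← integral_const_mul]
  exact congrArg _ (integral_re (hf.const_mul c))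

theorem tendstoInMeasure_zero_of_tendsto_integral {ι : Type*} {l : Filter ι} {g : ι → X → ℝ}
    (hg : ∀ n, Integrable (g n) μ) (hg0 : ∀ n, 0 ≤ᵐ[μ] g n)
    (h : Tendsto (fun n => ∫ x, g n x ∂μ) l (𝓝 0)) : TendstoInMeasure μ g l 0 := by
  refine tendstoInMeasure_of_tendsto_eLpNorm one_ne_zero (fun n => (hg n).aestronglyMeasurable)
    aestronglyMeasurable_const ?_
  have hL1 : ∀ n, eLpNorm (g n - 0) 1 μ = ENNReal.ofReal (∫ x, g n x ∂μ) := fun n => by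
    rw [sub_zero, ofReal_integral_eq_lintegral_ofReal (hg n) (hg0 n),
      eLpNorm_one_eq_lintegral_enorm]
    exact lintegral_congr_ae ((hg0 n).mono fun x hx => Real.enorm_eq_ofReal hx)
  simp_rw [hL1]
  simpa using ENNReal.tendsto_ofReal h

theorem tendsto_integral_zero_of_absolutelyContinuous [IsFiniteMeasure μ] [IsFiniteMeasure ν]
    (hνμ : ν ≪ μ) {g : ℕ → X → ℝ} {C : ℝ} (hg : ∀ n, AEStronglyMeasurable (g n) μ)
    (hg0 : ∀ n x, 0 ≤ g n x) (hgC : ∀ n x, g n x ≤ C)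
    (h : Tendsto (fun n => ∫ x, g n x ∂μ) atTop (𝓝 0)) :
    Tendsto (fun n => ∫ x, g n x ∂ν) atTop (𝓝 0) := by
  have hnorm : ∀ n x, ‖g n x‖ ≤ C := fun n x =>
    (Real.norm_of_nonneg (hg0 n x)).trans_le (hgC n x)
  have hmeas : TendstoInMeasure μ g atTop 0 :=
    tendstoInMeasure_zero_of_tendsto_integral
      (fun n => .of_bound (hg n) C (Eventually.of_forall (hnorm n)))
      (fun n => Eventually.of_forall (hg0 n)) h
  -- Every subsequence has a further one converging `μ`-a.e., hence `ν`-a.e.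
  refine tendsto_of_subseq_tendsto fun ns hns => ?_
  obtain ⟨ms, -, hae⟩ := (hmeas.comp hns).exists_seq_tendsto_ae
  refine ⟨ms, ?_⟩
  simpa using tendsto_integral_of_dominated_convergence (fun _ => C)
    (fun n => (hg _).mono_ac hνμ) (integrable_const C)
    (fun n => Eventually.of_forall (hnorm _)) (hνμ.ae_le hae)

theorem tendsto_norm_integral_one_of_absolutelyContinuous [IsProbabilityMeasure μ]
    [IsProbabilityMeasure ν] (hνμ : ν ≪ μ) {f : ℕ → X → ℂ}
    (hf : ∀ n, AEStronglyMeasurable (f n) μ) (hf1 : ∀ n x, ‖f n x‖ ≤ 1)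
    (h : Tendsto (fun n => ‖∫ x, f n x ∂μ‖) atTop (𝓝 1)) :
    Tendsto (fun n => ‖∫ x, f n x ∂ν‖) atTop (𝓝 1) := by
  set c : ℕ → ℂ := fun n => exp ((-arg (∫ x, f n x ∂μ) : ℝ) * I)
  have hc : ∀ n, ‖c n‖ = 1 := fun n => norm_exp_ofReal_mul_I _
  have hcμ : ∀ n, c n * ∫ x, f n x ∂μ = ‖∫ x, f n x ∂μ‖ := fun n => by
    conv_lhs => rw [← norm_mul_exp_arg_mul_I (∫ x, f n x ∂μ)]
    rw [mul_left_comm, ← exp_add, ofReal_neg, neg_mul, neg_add_cancel, exp_zero, mul_one]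
  have hre : ∀ n w, ‖w‖ ≤ 1 → |(c n * w).re| ≤ 1 := fun n w hw =>
    (abs_re_le_norm _).trans (by rwa [norm_mul, hc, one_mul])
  have hμ : Tendsto (fun n => ∫ x, 1 - (c n * f n x).re ∂μ) atTop (𝓝 0) := by
    simp_rw [integral_one_sub_re_mul (.of_bound (hf _) 1 (Eventually.of_forall (hf1 _))), hcμ,
      ofReal_re]
    simpa using h.const_sub 1
  have hν := tendsto_integral_zero_of_absolutelyContinuous hνμ (C := 2)
    (g := fun n x => 1 - (c n * f n x).re)
    (fun n => aestronglyMeasurable_const.sub ((hf n).const_mul (c n)).re)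
    (fun n x => by linarith [(abs_le.1 (hre n _ (hf1 n x))).2])
    (fun n x => by linarith [(abs_le.1 (hre n _ (hf1 n x))).1]) hμ
  simp_rw [integral_one_sub_re_mul
    (.of_bound ((hf _).mono_ac hνμ) 1 (Eventually.of_forall (hf1 _)))] at hν
  refine tendsto_of_tendsto_of_tendsto_of_le_of_le (by simpa using hν.const_sub 1)
    tendsto_const_nhds (fun n => ?_) (fun n => norm_integral_le_one_of_norm_le_one (hf1 n))
  calc (c n * ∫ x, f n x ∂ν).re ≤ ‖c n * ∫ x, f n x ∂ν‖ := re_le_norm _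
    _ = ‖∫ x, f n x ∂ν‖ := by rw [norm_mul, hc, one_mul]

end

theorem exists_seq_tendsto_of_le_ciSup {ι : Type*} [Nonempty ι] {φ : ι → ℝ} {a : ℝ}
    (h : a ≤ ⨆ i, φ i) (hle : ∀ i, φ i ≤ a) : ∃ u : ℕ → ι, Tendsto (φ ∘ u) atTop (𝓝 a) := by
  obtain ⟨v, -, hv, hvφ⟩ :=
    exists_seq_tendsto_sSup (Set.range_nonempty φ) ⟨a, Set.forall_mem_range.2 hle⟩
  choose u hu using hvφ
  refine ⟨u, ?_⟩
  rw [← iSup, le_antisymm (ciSup_le hle) h] at hv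
  simpa [Function.comp_def, hu] using hv

theorem cramer_condition_of_absolutelyContinuous_measure
    (d : ℕ) (ν₁ ν₂ : Measure (EuclideanSpace ℝ (Fin d)))
    [IsProbabilityMeasure ν₁] [IsProbabilityMeasure ν₂]
    (hac : ν₂ ≪ ν₁)
    (hC : ∀ α : ℝ, 0 < α →
      (⨆ s : {s : EuclideanSpace ℝ (Fin d) // α ≤ ‖s‖},
        ‖∫ x, Complex.exp (Complex.I * (inner ℝ s.1 x : ℝ)) ∂ν₂‖) < 1) :
    ∀ α : ℝ, 0 < α →
      (⨆ s : {s : EuclideanSpace ℝ (Fin d) // α ≤ ‖s‖},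
        ‖∫ x, Complex.exp (Complex.I * (inner ℝ s.1 x : ℝ)) ∂ν₁‖) < 1 := by
  intro α hα
  by_contra! hsup
  have hf1 : ∀ s x : EuclideanSpace ℝ (Fin d), ‖exp (I * (inner ℝ s x : ℝ))‖ ≤ 1 :=
    fun s x => (norm_exp_I_mul_ofReal _).le
  obtain _ | _ := isEmpty_or_nonempty {s : EuclideanSpace ℝ (Fin d) // α ≤ ‖s‖}
  · rw [Real.iSup_of_isEmpty] at hsup
    norm_num at hsup
  obtain ⟨u, hu⟩ := exists_seq_tendsto_of_le_ciSup hsup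
    fun s => norm_integral_le_one_of_norm_le_one (hf1 s.1)
  have hν₂ := tendsto_norm_integral_one_of_absolutelyContinuous hac (fun n => by fun_prop)
    (fun n => hf1 (u n).1) hu
  have hbdd : BddAbove (Set.range fun s : {s : EuclideanSpace ℝ (Fin d) // α ≤ ‖s‖} =>
      ‖∫ x, exp (I * (inner ℝ s.1 x : ℝ)) ∂ν₂‖) :=
    ⟨1, Set.forall_mem_range.2 fun s => norm_integral_le_one_of_norm_le_one (hf1 s.1)⟩
  exact (hC α hα).not_ge (le_of_tendsto' hν₂ fun n => le_ciSup hbdd (u n))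
end

section
/- For every compact set K ⊂ ℝ there exists M > 0 such that for all s ∈ ℝ and u ∈ K, |2(cosh(u + is) − 1)/(u + is)²| ≤ M/(1 + s²), where the function is extended by continuity (value 1) at u + is = 0. -/
/-! Writing `cosh z - 1` as the mean of the second-order Taylor remainders of `exp` at `±z`
gives `‖cosh z - 1‖ ≤ ‖z‖²` for `‖z‖ ≤ 1`, so the kernel is bounded by `2` there; for `‖z‖ ≥ 1`
the bound `‖cosh z‖ ≤ cosh (Re z)` and `1 + ‖z‖² ≤ 2‖z‖²` take over. Either way
`‖k z‖ (1 + ‖z‖²) ≤ 4 (cosh (Re z) + 1)`, and on `z = u + s i` with `u ∈ K` we have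
`s² ≤ ‖z‖²` while `cosh u` is bounded. -/

open Complex

namespace Complex

theorem norm_cosh_le_cosh_re (z : ℂ) : ‖cosh z‖ ≤ Real.cosh z.re := by
  rw [cosh, Real.cosh_eq, norm_div, Complex.norm_two, ← neg_re, ← norm_exp, ← norm_exp]
  gcongr
  exact norm_add_le _ _

theorem norm_cosh_sub_one_le_sq {z : ℂ} (hz : ‖z‖ ≤ 1) : ‖cosh z - 1‖ ≤ ‖z‖ ^ 2 := by
  have hpos := norm_exp_sub_one_sub_id_le hz
  have hneg := norm_exp_sub_one_sub_id_le (x := -z) (by rwa [norm_neg])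
  rw [norm_neg] at hneg
  have hsplit : cosh z - 1 = ((exp z - 1 - z) + (exp (-z) - 1 - -z)) / 2 := by
    rw [cosh]; ring
  rw [hsplit, norm_div, Complex.norm_two]
  linarith [norm_add_le (exp z - 1 - z) (exp (-z) - 1 - -z)]

end Complex

noncomputable def coshKernel (z : ℂ) : ℂ :=
  if z = 0 then 1 else 2 * (cosh z - 1) / z ^ 2

theorem norm_coshKernel_le_two {z : ℂ} (hz : ‖z‖ ≤ 1) : ‖coshKernel z‖ ≤ 2 := by
  unfold coshKernel
  split_ifs with h0
  · norm_num
  · have hz2 : 0 < ‖z‖ ^ 2 := by positivity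
    rw [norm_div, norm_mul, Complex.norm_two, norm_pow, div_le_iff₀ hz2]
    linarith [norm_cosh_sub_one_le_sq hz]

theorem norm_coshKernel_mul_sq_le {z : ℂ} (hz : z ≠ 0) :
    ‖coshKernel z‖ * ‖z‖ ^ 2 ≤ 2 * (Real.cosh z.re + 1) := by
  have hz2 : 0 < ‖z‖ ^ 2 := by positivity
  rw [coshKernel, if_neg hz, norm_div, norm_mul, Complex.norm_two, norm_pow, div_mul_cancel₀ _ hz2.ne']
  have := (norm_sub_le (cosh z) 1).trans (add_le_add (norm_cosh_le_cosh_re z) norm_one.le)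
  linarith

theorem norm_coshKernel_mul_le (z : ℂ) :
    ‖coshKernel z‖ * (1 + ‖z‖ ^ 2) ≤ 4 * (Real.cosh z.re + 1) := by
  have hcosh := Real.one_le_cosh z.re
  rcases le_or_gt ‖z‖ 1 with hsmall | hlarge
  · have hsq : ‖z‖ ^ 2 ≤ 1 := pow_le_one₀ (norm_nonneg z) hsmall
    calc ‖coshKernel z‖ * (1 + ‖z‖ ^ 2) ≤ 2 * 2 := by
          gcongr
          · exact norm_coshKernel_le_two hsmall
          · linarith
      _ ≤ 4 * (Real.cosh z.re + 1) := by linarith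
  · have hz : z ≠ 0 := norm_pos_iff.mp (one_pos.trans hlarge)
    have hsq : 1 ≤ ‖z‖ ^ 2 := one_le_pow₀ hlarge.le
    calc ‖coshKernel z‖ * (1 + ‖z‖ ^ 2) ≤ ‖coshKernel z‖ * (2 * ‖z‖ ^ 2) := by gcongr; linarith
      _ = 2 * (‖coshKernel z‖ * ‖z‖ ^ 2) := by ring
      _ ≤ 4 * (Real.cosh z.re + 1) := by linarith [norm_coshKernel_mul_sq_le hz]

theorem cosh_kernel_decay_bound
    (K : Set ℝ) (hK : IsCompact K) :
    ∃ M : ℝ, 0 < M ∧ ∀ (s : ℝ), ∀ u ∈ K,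
      ‖(if (u + s * Complex.I : ℂ) = 0 then 1
          else 2 * (Complex.cosh (u + s * Complex.I) - 1) / (u + s * Complex.I) ^ 2)‖
        ≤ M / (1 + s ^ 2) := by
  obtain ⟨C, hC⟩ := (hK.image Real.continuous_cosh).isBounded.bddAbove
  refine ⟨4 * (max C 1 + 1), by positivity, fun s u hu => ?_⟩
  set z : ℂ := u + s * I
  have hre : z.re = u := by simp [z]
  have him : s ^ 2 ≤ ‖z‖ ^ 2 := by
    simpa [z, sq_abs] using pow_le_pow_left₀ (abs_nonneg _) (abs_im_le_norm z) 2
  have hcoshC : Real.cosh z.re ≤ max C 1 := hre ▸ (hC ⟨u, hu, rfl⟩).trans (le_max_left _ _)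
  change ‖coshKernel z‖ ≤ _
  rw [le_div_iff₀ (by positivity)]
  calc ‖coshKernel z‖ * (1 + s ^ 2) ≤ ‖coshKernel z‖ * (1 + ‖z‖ ^ 2) := by gcongr
    _ ≤ 4 * (Real.cosh z.re + 1) := norm_coshKernel_mul_le z
    _ ≤ 4 * (max C 1 + 1) := by gcongr
end

section
/- Let ρ be a symmetric probability measure on ℝ with positive variance σ² and such that (0,0) lies in the interior of the domain of the log-Laplace transform L(u,v) = ln ∫ e^{uz+vz²} dρ(z). Then there exists γ > 0 such that, for all δ ∈ (0, σ²) small enough and all n large enough, E(e^{S_n²/(2T_n)} 1_{0 < T_n ≤ nδ}) ≤ e^{−nγ}, where S_n = X₁+…+X_n and T_n = X₁²+…+X_n² for X₁,…,X_n i.i.d. with law ρ. -/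
/-!
Let `k` be the number of nonzero `X_i`. Cauchy–Schwarz over those indices gives `S² ≤ k T`, so
`exp (S² / (2T)) ≤ exp (k / 2)`, and on `{T ≤ nδ}` this is at most
`exp (t n δ) ∏ᵢ g_t(Xᵢ)` with `g_t(z) = exp (𝟙{z ≠ 0} / 2 - t z²)`, for every `t ≥ 0`.
The expectation of the product is `(∫ g_t dρ)ⁿ`, and `∫ g_t dρ → ρ{0} < 1` as `t → ∞` by
dominated convergence (a positive variance rules out `ρ = δ₀`). Fixing `t` with
`∫ g_t dρ ≤ e^{-c}` gives the bound `exp (n (t δ - c)) ≤ exp (-n c / 2)` as soon as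
`δ ≤ c / (2t)`, for every `n`.
-/

open MeasureTheory Filter Finset Topology

namespace SelfNormalizedSum

noncomputable def supportWeight (t z : ℝ) : ℝ :=
  Real.exp ((if z = 0 then 0 else 1 / 2) - t * z ^ 2)

lemma supportWeight_pos (t z : ℝ) : 0 < supportWeight t z := Real.exp_pos _

lemma supportWeight_le {t : ℝ} (ht : 0 ≤ t) (z : ℝ) : supportWeight t z ≤ Real.exp (1 / 2) := by
  unfold supportWeight
  gcongr
  split_ifs <;> nlinarith [sq_nonneg z]

lemma measurable_supportWeight (t : ℝ) : Measurable (supportWeight t) := by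
  unfold supportWeight
  exact ((Measurable.ite measurableSet_eq measurable_const measurable_const).sub
    (by fun_prop)).exp

lemma sq_sum_div_le_card_support {ι : Type*} [Fintype ι] (x : ι → ℝ) :
    (∑ i, x i) ^ 2 / (2 * ∑ i, x i ^ 2) ≤ (#{i | x i ≠ 0} : ℝ) / 2 := by
  rcases (sum_nonneg fun i _ => sq_nonneg (x i) : 0 ≤ ∑ i, x i ^ 2).eq_or_lt with hT | hT
  · rw [← hT, mul_zero, div_zero]; positivity
  have hS : ∑ i, x i = ∑ i with x i ≠ 0, x i := (sum_filter_ne_zero _).symm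
  have hT' : ∑ i, x i ^ 2 = ∑ i with x i ≠ 0, x i ^ 2 :=
    (sum_filter_of_ne fun i _ => (pow_ne_zero_iff two_ne_zero).mp).symm
  have hCS := sq_sum_le_card_mul_sum_sq (s := {i | x i ≠ 0}) (f := x)
  rw [← hS, ← hT'] at hCS
  rw [div_le_div_iff₀ (by positivity) two_pos]
  nlinarith

lemma exp_sq_sum_div_le_prod_supportWeight {ι : Type*} [Fintype ι] {t a : ℝ} (ht : 0 ≤ t)
    {x : ι → ℝ} (hx : ∑ i, x i ^ 2 ≤ a) :
    Real.exp ((∑ i, x i) ^ 2 / (2 * ∑ i, x i ^ 2))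
      ≤ Real.exp (t * a) * ∏ i, supportWeight t (x i) := by
  have hsupp : ∑ i, (if x i = 0 then (0 : ℝ) else 1 / 2) = (#{i | x i ≠ 0} : ℝ) / 2 := by
    rw [sum_ite, sum_const_zero, zero_add, sum_const, nsmul_eq_mul]
    ring
  simp only [supportWeight, ← Real.exp_sum, ← Real.exp_add]
  gcongr
  rw [sum_sub_distrib, hsupp, ← mul_sum]
  linarith [sq_sum_div_le_card_support x, mul_le_mul_of_nonneg_left hx ht]

variable {ρ : Measure ℝ} [IsFiniteMeasure ρ]

lemma integrable_supportWeight {t : ℝ} (ht : 0 ≤ t) : Integrable (supportWeight t) ρ :=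
  (integrable_const (Real.exp (1 / 2))).mono' (measurable_supportWeight t).aestronglyMeasurable
    (ae_of_all _ fun z => by
      rw [Real.norm_of_nonneg (supportWeight_pos t z).le]
      exact supportWeight_le ht z)

lemma integral_exp_sq_sum_div_le {ι : Type*} [Fintype ι] {t : ℝ} (ht : 0 ≤ t) (a : ℝ) :
    ∫ x : ι → ℝ, (if 0 < ∑ i, x i ^ 2 ∧ ∑ i, x i ^ 2 ≤ a then
        Real.exp ((∑ i, x i) ^ 2 / (2 * ∑ i, x i ^ 2)) else 0) ∂(Measure.pi fun _ => ρ)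
      ≤ Real.exp (t * a) * (∫ z, supportWeight t z ∂ρ) ^ Fintype.card ι := by
  rw [← integral_fintype_prod_eq_pow, ← integral_const_mul]
  refine integral_mono_of_nonneg (ae_of_all _ fun x => ?_)
    ((Integrable.fintype_prod fun _ => integrable_supportWeight ht).const_mul _)
    (ae_of_all _ fun x => ?_)
  · dsimp only [Pi.zero_apply]
    split_ifs <;> positivity
  · dsimp only
    split_ifs with h
    · exact exp_sq_sum_div_le_prod_supportWeight ht h.2
    · exact mul_nonneg (Real.exp_pos _).le (prod_nonneg fun i _ => (supportWeight_pos t (x i)).le)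

lemma tendsto_integral_supportWeight :
    Tendsto (fun t => ∫ z, supportWeight t z ∂ρ) atTop (𝓝 (ρ.real {0})) := by
  have hlim (z : ℝ) :
      Tendsto (fun t => supportWeight t z) atTop (𝓝 (({0} : Set ℝ).indicator 1 z)) := by
    by_cases hz : z = 0
    · simp [supportWeight, hz]
    · simp only [supportWeight, hz, if_false, Set.mem_singleton_iff, not_false_eq_true,
        Set.indicator_of_notMem, sub_eq_add_neg]
      exact Real.tendsto_exp_atBot.comp <| tendsto_atBot_add_const_left _ _ <|
        tendsto_neg_atTop_atBot.comp <| tendsto_id.atTop_mul_const (by positivity)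
  rw [← integral_indicator_one (measurableSet_singleton 0)]
  refine tendsto_integral_filter_of_dominated_convergence (fun _ => Real.exp (1 / 2))
    (.of_forall fun t => (measurable_supportWeight t).aestronglyMeasurable)
    ((eventually_ge_atTop 0).mono fun t ht => ae_of_all _ fun z => ?_)
    (integrable_const _) (ae_of_all _ hlim)
  rw [Real.norm_of_nonneg (supportWeight_pos t z).le]
  exact supportWeight_le ht z

lemma exists_integral_supportWeight_le_exp (hρ : ρ.real {0} < 1) :
    ∃ t > 0, ∃ c > 0, ∫ z, supportWeight t z ∂ρ ≤ Real.exp (-c) := by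
  obtain ⟨r, hr0, hr1⟩ := exists_between hρ
  have hr : 0 < r := measureReal_nonneg.trans_lt hr0
  obtain ⟨t, hrt, ht⟩ := ((tendsto_integral_supportWeight.eventually
    (eventually_lt_nhds hr0)).and (eventually_gt_atTop 0)).exists
  refine ⟨t, ht, -Real.log r, neg_pos.mpr (Real.log_neg hr hr1), ?_⟩
  rw [neg_neg, Real.exp_log hr]
  exact hrt.le

lemma measureReal_singleton_zero_lt_one_of_integral_sq_ne_zero {ρ : Measure ℝ}
    [IsProbabilityMeasure ρ] (h : ∫ z, z ^ 2 ∂ρ ≠ 0) : ρ.real {0} < 1 := by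
  refine measureReal_le_one.lt_of_ne fun h1 => h (integral_eq_zero_of_ae ?_)
  have h0 : ({0} : Set ℝ) ∈ ae ρ := by
    rwa [mem_ae_iff, prob_compl_eq_zero_iff (measurableSet_singleton 0),
      ← ENNReal.toReal_eq_one_iff]
  filter_upwards [h0] with z hz
  simp [Set.mem_singleton_iff.mp hz]

end SelfNormalizedSum

open SelfNormalizedSum in
theorem exponential_bound_near_origin_general
    (ρ : Measure ℝ) [IsProbabilityMeasure ρ]
    (σ2 : ℝ) (hσ2 : 0 < σ2) (hvar : ∫ z, z ^ 2 ∂ρ = σ2) :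
    ∃ γ > 0, ∃ δ0 > 0, ∀ δ : ℝ, 0 < δ → δ < δ0 → δ < σ2 →
      ∃ N : ℕ, ∀ n ≥ N,
        (∫ x : Fin n → ℝ,
            (if 0 < ∑ i, (x i) ^ 2 ∧ ∑ i, (x i) ^ 2 ≤ n * δ then
              Real.exp ((∑ i, x i) ^ 2 / (2 * ∑ i, (x i) ^ 2)) else 0)
          ∂(Measure.pi fun _ : Fin n => ρ))
        ≤ Real.exp (-(n * γ)) := by
  obtain ⟨t, ht, c, hc, hρt⟩ := exists_integral_supportWeight_le_exp
    (measureReal_singleton_zero_lt_one_of_integral_sq_ne_zero (hvar ▸ hσ2.ne'))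
  refine ⟨c / 2, by positivity, c / (2 * t), by positivity, fun δ _ hδt _ => ⟨0, fun n _ => ?_⟩⟩
  have htδ : t * δ ≤ c / 2 := by
    rw [lt_div_iff₀ (by positivity)] at hδt
    linarith
  calc _ ≤ Real.exp (t * (n * δ)) * (∫ z, supportWeight t z ∂ρ) ^ n := by
        simpa using integral_exp_sq_sum_div_le (ι := Fin n) (ρ := ρ) ht.le (n * δ)
    _ ≤ Real.exp (t * (n * δ)) * Real.exp (-c) ^ n := by
        gcongr
        exact integral_nonneg fun z => (supportWeight_pos t z).le
    _ = Real.exp (n * (t * δ - c)) := by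
        rw [← Real.exp_nat_mul, ← Real.exp_add]
        ring_nf
    _ ≤ Real.exp (-(n * (c / 2))) :=
        Real.exp_le_exp.mpr (by nlinarith [n.cast_nonneg (α := ℝ)])

theorem exponential_bound_near_origin
    (ρ : Measure ℝ) [IsProbabilityMeasure ρ]
    (hsymm : ρ.map (fun z => -z) = ρ)
    (σ2 : ℝ) (hσ2 : 0 < σ2) (hvar : ∫ z, z ^ 2 ∂ρ = σ2)
    (hL : ∃ ε > 0, ∀ u v : ℝ, ‖(u, v)‖ < ε →
      Integrable (fun z => Real.exp (u * z + v * z ^ 2)) ρ) :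
    ∃ γ > 0, ∃ δ0 > 0, ∀ δ : ℝ, 0 < δ → δ < δ0 → δ < σ2 →
      ∃ N : ℕ, ∀ n ≥ N,
        (∫ x : Fin n → ℝ,
            (if 0 < ∑ i, (x i) ^ 2 ∧ ∑ i, (x i) ^ 2 ≤ n * δ then
              Real.exp ((∑ i, x i) ^ 2 / (2 * ∑ i, (x i) ^ 2)) else 0)
          ∂(Measure.pi fun _ : Fin n => ρ))
        ≤ Real.exp (-(n * γ)) :=
  exponential_bound_near_origin_general ρ σ2 hσ2 hvar
end
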